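/- Let C ⊆ {0,1}ⁿ be a neural code and c ∈ {0,1}ⁿ a codeword. Define L = {f ∈ CF(J_C) : f(c) = 0}, M = {f ∈ CF(J_C) : f(c) = 1}, and N = {f·(x_j − c_j) : f ∈ M, 1 ≤ j ≤ n, (x_j − c_j − 1) does not divide f, and f·(x_j − c_j) is not a polynomial multiple of any element of L}. Then CF(J_{C∪{c}}) = L ∪ N. -/
import Mathlib


open MvPolynomial

/-- The characteristic polynomial `ρ_v = ∏ i, (1 - v_i - x_i)` of a word `v ∈ {0,1}ⁿ = 𝔽₂ⁿ`. -/
noncomputable def rho (n : ℕ) (v : Fin n → ZMod 2) : MvPolynomial (Fin n) (ZMod 2) :=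
  ∏ i, (1 - C (v i) - X i)

/-- The neural ideal `J_C = ⟨ρ_v : v ∉ C⟩` of a neural code `C ⊆ {0,1}ⁿ`. -/
noncomputable def neuralIdeal (n : ℕ) (Co : Set (Fin n → ZMod 2)) :
    Ideal (MvPolynomial (Fin n) (ZMod 2)) :=
  Ideal.span { p | ∃ v, v ∉ Co ∧ p = rho n v }

/-- A pseudo-monomial: `∏_{i∈σ} x_i ∏_{j∈τ} (1 - x_j)` with `σ, τ` disjoint. -/
def IsPseudoMonomial (n : ℕ) (f : MvPolynomial (Fin n) (ZMod 2)) : Prop :=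
  ∃ σ τ : Finset (Fin n), Disjoint σ τ ∧
    f = (∏ i ∈ σ, X i) * ∏ j ∈ τ, (1 - X j)

/-- `f` is a minimal pseudo-monomial of the ideal `J`. -/
def IsMinimalPM (n : ℕ) (J : Ideal (MvPolynomial (Fin n) (ZMod 2)))
    (f : MvPolynomial (Fin n) (ZMod 2)) : Prop :=
  f ∈ J ∧ IsPseudoMonomial n f ∧
    ¬ ∃ g, IsPseudoMonomial n g ∧ g ∈ J ∧ g.totalDegree < f.totalDegree ∧
      ∃ h, f = g * h

/-- The canonical form `CF(J)`: the set of all minimal pseudo-monomials of `J`. -/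
def CF (n : ℕ) (J : Ideal (MvPolynomial (Fin n) (ZMod 2))) :
    Set (MvPolynomial (Fin n) (ZMod 2)) :=
  { f | IsMinimalPM n J f }

/-- An ideal is a pseudo-monomial ideal if it is generated by finitely many pseudo-monomials. -/
def IsPseudoMonomialIdeal (n : ℕ) (J : Ideal (MvPolynomial (Fin n) (ZMod 2))) : Prop :=
  ∃ S : Finset (MvPolynomial (Fin n) (ZMod 2)),
    (∀ f ∈ S, IsPseudoMonomial n f) ∧ J = Ideal.span (S : Set (MvPolynomial (Fin n) (ZMod 2)))

/-- A polynomial is square-free if every variable occurs with exponent at most 1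
in every monomial of its support. -/
def IsSquareFreePoly (n : ℕ) (f : MvPolynomial (Fin n) (ZMod 2)) : Prop :=
  ∀ m ∈ f.support, ∀ i, m i ≤ 1

/-- The Boolean ideal `B = ⟨x_i (1 - x_i) : 1 ≤ i ≤ n⟩`. -/
noncomputable def boolIdeal (n : ℕ) : Ideal (MvPolynomial (Fin n) (ZMod 2)) :=
  Ideal.span { p | ∃ i : Fin n, p = X i * (1 - X i) }

/-- The square-free representative `h_R` of `h` modulo the Boolean ideal:
replace every exponent by its truncation at 1. -/
noncomputable def sqReduce (n : ℕ) (h : MvPolynomial (Fin n) (ZMod 2)) :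
    MvPolynomial (Fin n) (ZMod 2) :=
  ∑ m ∈ h.support,
    monomial (Finsupp.mapRange (fun e => min e 1) (by simp) m) (coeff m h)

/-- The set of reduced products `P(C,D) = {(f g)_R : f ∈ CF(J_C), g ∈ CF(J_D)}`. -/
def reducedProducts (n : ℕ) (Co D : Set (Fin n → ZMod 2)) :
    Set (MvPolynomial (Fin n) (ZMod 2)) :=
  { p | ∃ f ∈ CF n (neuralIdeal n Co), ∃ g ∈ CF n (neuralIdeal n D), p = sqReduce n (f * g) }

/-- The set of minimal reduced products `MP(C,D)`. -/
def minReducedProducts (n : ℕ) (Co D : Set (Fin n → ZMod 2)) :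
    Set (MvPolynomial (Fin n) (ZMod 2)) :=
  { h | h ∈ reducedProducts n Co D ∧ h ≠ 0 ∧
    ¬ ∃ f ∈ reducedProducts n Co D, ∃ g : MvPolynomial (Fin n) (ZMod 2),
      1 ≤ g.totalDegree ∧ h = f * g }

/-- The code `C(U)` of a cover `U = {U_1, …, U_n}` of a topological space `X`. -/
def codeOfCover {X : Type*} [TopologicalSpace X] (n : ℕ) (U : Fin n → Set X) :
    Set (Fin n → ZMod 2) :=
  { v | ((⋂ i ∈ { i : Fin n | v i = 1 }, U i) \ ⋃ j ∈ { j : Fin n | v j = 0 }, U j).Nonempty }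

/-! ### Auxiliary development for stmt1 -/

namespace NeuralAux

variable {n : ℕ}

abbrev P (n : ℕ) := MvPolynomial (Fin n) (ZMod 2)

/-- The pseudo-monomial attached to a pair of finsets. -/
noncomputable def pm (σ τ : Finset (Fin n)) : P n :=
  (∏ i ∈ σ, X i) * ∏ j ∈ τ, (1 - X j)

/-- The "non-vanishing cube" predicate. -/
def cube (σ τ : Finset (Fin n)) (v : Fin n → ZMod 2) : Prop :=
  (∀ i ∈ σ, v i = 1) ∧ (∀ j ∈ τ, v j = 0)

/-- `pm σ τ` vanishes on all of `D`. -/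
def Covers (D : Set (Fin n → ZMod 2)) (σ τ : Finset (Fin n)) : Prop :=
  ∀ v ∈ D, ¬ cube σ τ v

/-- minimal cover -/
def MinCov (D : Set (Fin n → ZMod 2)) (σ τ : Finset (Fin n)) : Prop :=
  Disjoint σ τ ∧ Covers D σ τ ∧
    ∀ σ' τ' : Finset (Fin n), σ' ⊆ σ → τ' ⊆ τ → Covers D σ' τ' → σ' = σ ∧ τ' = τ

lemma zmod2_cases (a : ZMod 2) : a = 0 ∨ a = 1 := by revert a; decide

lemma zmod2_ne_zero {a : ZMod 2} : a ≠ 0 ↔ a = 1 := by revert a; decide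

lemma zmod2_onesub_ne {a : ZMod 2} : (1 : ZMod 2) - a ≠ 0 ↔ a = 0 := by revert a; decide

lemma zmod2_one_sub_self (a : ZMod 2) : 1 - a - a = 1 := by revert a; decide

lemma eval_pm (σ τ : Finset (Fin n)) (v : Fin n → ZMod 2) :
    eval v (pm σ τ) = (∏ i ∈ σ, v i) * ∏ j ∈ τ, (1 - v j) := by
  simp [pm]

lemma eval_pm_ne_zero {σ τ : Finset (Fin n)} {v : Fin n → ZMod 2} :
    eval v (pm σ τ) ≠ 0 ↔ cube σ τ v := by
  rw [eval_pm, mul_ne_zero_iff, Finset.prod_ne_zero_iff, Finset.prod_ne_zero_iff]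
  unfold cube
  constructor
  · rintro ⟨h1, h2⟩
    exact ⟨fun i hi => zmod2_ne_zero.mp (h1 i hi), fun j hj => zmod2_onesub_ne.mp (h2 j hj)⟩
  · rintro ⟨h1, h2⟩
    exact ⟨fun i hi => zmod2_ne_zero.mpr (h1 i hi), fun j hj => zmod2_onesub_ne.mpr (h2 j hj)⟩

lemma eval_pm_eq_one {σ τ : Finset (Fin n)} {v : Fin n → ZMod 2} :
    eval v (pm σ τ) = 1 ↔ cube σ τ v := by
  rw [← eval_pm_ne_zero]
  constructor
  · intro h; rw [h]; exact one_ne_zero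
  · exact fun h => zmod2_ne_zero.mp h

lemma eval_pm_eq_zero {σ τ : Finset (Fin n)} {v : Fin n → ZMod 2} :
    eval v (pm σ τ) = 0 ↔ ¬ cube σ τ v := by
  rw [← eval_pm_ne_zero]; tauto

def w1 (σ : Finset (Fin n)) : Fin n → ZMod 2 := fun i => if i ∈ σ then 1 else 0

def w2 (τ : Finset (Fin n)) : Fin n → ZMod 2 := fun i => if i ∈ τ then 0 else 1

lemma cube_w1 {σ τ : Finset (Fin n)} (h : Disjoint σ τ) : cube σ τ (w1 σ) := by
  refine ⟨fun i hi => if_pos hi, fun j hj => if_neg fun hjσ => ?_⟩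
  exact (Finset.disjoint_left.mp h hjσ) hj

lemma cube_w2 {σ τ : Finset (Fin n)} (h : Disjoint σ τ) : cube σ τ (w2 τ) := by
  refine ⟨fun i hi => if_neg fun hiτ => ?_, fun j hj => if_pos hj⟩
  exact (Finset.disjoint_left.mp h hi) hiτ

lemma dvd_pm_of_le {σ' σ τ' τ : Finset (Fin n)} (hσ : σ' ⊆ σ) (hτ : τ' ⊆ τ) :
    pm σ' τ' ∣ pm σ τ := by
  refine ⟨pm (σ \ σ') (τ \ τ'), ?_⟩
  unfold pm
  rw [← Finset.prod_sdiff hσ, ← Finset.prod_sdiff hτ]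
  ring

lemma le_of_pm_eq_mul {σ τ σ' τ' : Finset (Fin n)} (hd : Disjoint σ τ) (hd' : Disjoint σ' τ')
    {h : P n} (heq : pm σ τ = pm σ' τ' * h) : σ' ⊆ σ ∧ τ' ⊆ τ := by
  have key : ∀ v : Fin n → ZMod 2, cube σ τ v → cube σ' τ' v := by
    intro v hv
    have h1 : eval v (pm σ τ) ≠ 0 := eval_pm_ne_zero.mpr hv
    rw [heq, map_mul] at h1
    exact eval_pm_ne_zero.mp (left_ne_zero_of_mul h1)
  constructor
  · intro i hi
    have h2 := (key _ (cube_w1 hd)).1 i hi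
    by_contra hiσ
    rw [w1, if_neg hiσ] at h2
    exact zero_ne_one h2
  · intro j hj
    have h2 := (key _ (cube_w2 hd)).2 j hj
    by_contra hjτ
    rw [w2, if_neg hjτ] at h2
    exact one_ne_zero h2

lemma pm_inj {σ τ σ' τ' : Finset (Fin n)} (hd : Disjoint σ τ) (hd' : Disjoint σ' τ')
    (heq : pm σ τ = pm σ' τ') : σ = σ' ∧ τ = τ' := by
  have h1 := le_of_pm_eq_mul hd hd' (h := 1) (by rw [mul_one, heq])
  have h2 := le_of_pm_eq_mul hd' hd (h := 1) (by rw [mul_one, heq])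
  exact ⟨h2.1.antisymm h1.1, h2.2.antisymm h1.2⟩

/-! ### Degrees -/

noncomputable def ind (s : Finset (Fin n)) : Fin n →₀ ℕ := ∑ i ∈ s, Finsupp.single i 1

lemma ind_apply (s : Finset (Fin n)) (i : Fin n) : ind s i = if i ∈ s then 1 else 0 := by
  rw [ind, Finset.sum_apply']
  rw [Finset.sum_congr rfl (fun j _ => Finsupp.single_apply)]
  exact Finset.sum_ite_eq' s i (fun _ => 1)

lemma ind_inj {s t : Finset (Fin n)} (h : ind s = ind t) : s = t := by
  ext i
  have := congrFun (congrArg (fun f : Fin n →₀ ℕ => (f : Fin n → ℕ)) h) i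
  simp only [ind_apply] at this
  by_cases hs : i ∈ s <;> by_cases ht : i ∈ t <;> simp [hs, ht] at this ⊢

lemma prod_X_eq (s : Finset (Fin n)) : (∏ i ∈ s, X i : P n) = monomial (ind s) 1 := by
  classical
  induction s using Finset.induction with
  | empty => simp [ind]
  | @insert a s ha ih =>
    rw [Finset.prod_insert ha, ih]
    have hind : ind (insert a s) = Finsupp.single a 1 + ind s := by
      rw [ind, ind, Finset.sum_insert ha]
    rw [hind, show (X a : P n) = monomial (Finsupp.single a 1) 1 by
      rw [← X_pow_eq_monomial, pow_one]]
    rw [monomial_mul, one_mul]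

lemma one_sub_X_eq (j : Fin n) : (1 - X j : P n) = X j + 1 := by
  rw [CharTwo.sub_eq_add, add_comm]

lemma pm_eq_sum {σ τ : Finset (Fin n)} (hd : Disjoint σ τ) :
    pm σ τ = ∑ t ∈ τ.powerset, monomial (ind (σ ∪ t)) 1 := by
  unfold pm
  rw [Finset.prod_congr rfl (fun j _ => one_sub_X_eq j), Finset.prod_add,
    Finset.mul_sum]
  refine Finset.sum_congr rfl fun t ht => ?_
  rw [Finset.mem_powerset] at ht
  have hdt : Disjoint σ t := hd.mono_right ht
  rw [Finset.prod_const_one, mul_one, ← Finset.prod_union hdt, prod_X_eq]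

lemma coeff_pm_top {σ τ : Finset (Fin n)} (hd : Disjoint σ τ) :
    coeff (ind (σ ∪ τ)) (pm σ τ) = 1 := by
  classical
  rw [pm_eq_sum hd]
  rw [MvPolynomial.coeff_sum]
  have : ∀ t ∈ τ.powerset, coeff (ind (σ ∪ τ)) ((monomial (ind (σ ∪ t)) (1 : ZMod 2)))
      = if t = τ then 1 else 0 := by
    intro t ht
    rw [Finset.mem_powerset] at ht
    rw [coeff_monomial]
    congr 1
    simp only [eq_iff_iff]
    constructor
    · intro h
      have h2 := ind_inj h
      have hdt : Disjoint σ t := hd.mono_right ht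
      calc t = (σ ∪ t) \ σ := (Finset.union_sdiff_cancel_left hdt).symm
        _ = (σ ∪ τ) \ σ := by rw [h2]
        _ = τ := Finset.union_sdiff_cancel_left hd
    · rintro rfl; rfl
  rw [Finset.sum_congr rfl this, Finset.sum_ite_eq' τ.powerset τ (fun _ => 1),
    if_pos (Finset.mem_powerset.mpr le_rfl)]

lemma ind_sum_eq_card (s : Finset (Fin n)) : (ind s).sum (fun _ e => e) = s.card := by
  have hsupp : (ind s).support = s := by
    ext i
    rw [Finsupp.mem_support_iff, ind_apply]
    by_cases h : i ∈ s <;> simp [h]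
  rw [Finsupp.sum, hsupp]
  rw [Finset.sum_congr rfl (fun i hi => by rw [ind_apply, if_pos hi])]
  simp

lemma totalDegree_one_sub_X (j : Fin n) : (1 - X j : P n).totalDegree ≤ 1 := by
  rw [one_sub_X_eq]
  refine le_trans (totalDegree_add _ _) ?_
  simp [totalDegree_X, totalDegree_one]

lemma totalDegree_pm {σ τ : Finset (Fin n)} (hd : Disjoint σ τ) :
    (pm σ τ).totalDegree = σ.card + τ.card := by
  apply le_antisymm
  · refine le_trans (totalDegree_mul _ _) ?_
    gcongr
    · refine le_trans (totalDegree_finset_prod _ _) ?_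
      simp [totalDegree_X]
    · refine le_trans (totalDegree_finset_prod _ _) ?_
      calc (∑ j ∈ τ, (1 - X j : P n).totalDegree) ≤ ∑ j ∈ τ, 1 :=
        Finset.sum_le_sum fun j _ => totalDegree_one_sub_X j
        _ = τ.card := by simp
  · have hmem : ind (σ ∪ τ) ∈ (pm σ τ).support := by
      rw [mem_support_iff, coeff_pm_top hd]; exact one_ne_zero
    have := le_totalDegree hmem
    rwa [ind_sum_eq_card, Finset.card_union_of_disjoint hd] at this

/-! ### Multilinearity and interpolation -/

lemma degreeOf_prod_le {ι : Type*} (s : Finset ι) (f : ι → P n) (k : Fin n) :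
    degreeOf k (∏ i ∈ s, f i) ≤ ∑ i ∈ s, degreeOf k (f i) := by
  classical
  induction s using Finset.induction with
  | empty => simpa using degreeOf_C (1 : ZMod 2) k
  | @insert a s ha ih =>
    rw [Finset.prod_insert ha, Finset.sum_insert ha]
    exact le_trans (degreeOf_mul_le _ _ _) (add_le_add le_rfl ih)

lemma degreeOf_one_sub_X (j k : Fin n) :
    degreeOf k (1 - X j : P n) ≤ if k = j then 1 else 0 := by
  rw [CharTwo.sub_eq_add]
  refine le_trans (degreeOf_add_le _ _ _) ?_
  rw [show degreeOf k (1 : P n) = 0 by rw [← C_1]; exact degreeOf_C 1 k]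
  rw [degreeOf_X]
  simp

lemma mem_restrictDegree_of_degreeOf_le {p : P n} (h : ∀ k, degreeOf k p ≤ 1) :
    p ∈ restrictDegree (Fin n) (ZMod 2) 1 := by
  rw [mem_restrictDegree]
  intro s hs i
  exact le_trans (degreeOf_le_iff.mp (h i) s hs) le_rfl

lemma pm_mem_restrict {σ τ : Finset (Fin n)} (hd : Disjoint σ τ) :
    pm σ τ ∈ restrictDegree (Fin n) (ZMod 2) 1 := by
  apply mem_restrictDegree_of_degreeOf_le
  intro k
  refine le_trans (degreeOf_mul_le _ _ _) ?_
  have h1 : degreeOf k (∏ i ∈ σ, X i : P n) ≤ if k ∈ σ then 1 else 0 := by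
    refine le_trans (degreeOf_prod_le σ _ k) ?_
    rw [Finset.sum_congr rfl (fun i _ => degreeOf_X k i)]
    rw [Finset.sum_ite_eq σ k (fun _ => 1)]
  have h2 : degreeOf k (∏ j ∈ τ, (1 - X j) : P n) ≤ if k ∈ τ then 1 else 0 := by
    refine le_trans (degreeOf_prod_le τ _ k) ?_
    refine le_trans (Finset.sum_le_sum fun j _ => degreeOf_one_sub_X j k) ?_
    rw [Finset.sum_ite_eq τ k (fun _ => 1)]
  refine le_trans (add_le_add h1 h2) ?_
  by_cases hkσ : k ∈ σ
  · have : k ∉ τ := Finset.disjoint_left.mp hd hkσ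
    simp [hkσ, this]
  · by_cases hkτ : k ∈ τ <;> simp [hkσ, hkτ]

lemma rho_mem_restrict (v : Fin n → ZMod 2) :
    rho n v ∈ restrictDegree (Fin n) (ZMod 2) 1 := by
  apply mem_restrictDegree_of_degreeOf_le
  intro k
  rw [rho]
  refine le_trans (degreeOf_prod_le Finset.univ _ k) ?_
  have h1 : ∀ i : Fin n, degreeOf k (1 - C (v i) - X i : P n) ≤ if k = i then 1 else 0 := by
    intro i
    rw [CharTwo.sub_eq_add (1 - C (v i)) (X i), show (1 : P n) - C (v i) = C (1 - v i) by
      rw [map_sub, C_1]]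
    refine le_trans (degreeOf_add_le _ _ _) ?_
    rw [degreeOf_C, degreeOf_X]
    simp
  refine le_trans (Finset.sum_le_sum fun i _ => h1 i) ?_
  rw [Finset.sum_ite_eq Finset.univ k (fun _ => 1), if_pos (Finset.mem_univ k)]

lemma eval_rho (w v : Fin n → ZMod 2) : eval w (rho n v) = if v = w then 1 else 0 := by
  rw [rho]
  simp only [map_prod, map_sub, map_one, eval_C, eval_X]
  by_cases h : v = w
  · subst h
    rw [if_pos rfl]
    rw [Finset.prod_congr rfl (fun i _ => zmod2_one_sub_self (v i))]
    exact Finset.prod_const_one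
  · rw [if_neg h]
    obtain ⟨i, hi⟩ : ∃ i, v i ≠ w i := by
      by_contra hc
      push_neg at hc
      exact h (funext hc)
    refine Finset.prod_eq_zero (Finset.mem_univ i) ?_
    revert hi
    generalize v i = a; generalize w i = b
    revert a b; decide

lemma interp {p : P n} (hp : p ∈ restrictDegree (Fin n) (ZMod 2) 1) :
    p = ∑ v : Fin n → ZMod 2, MvPolynomial.C (eval v p) * rho n v := by
  have hcard : Fintype.card (ZMod 2) - 1 = 1 := by rw [ZMod.card]
  set q : P n := p - ∑ v : Fin n → ZMod 2, MvPolynomial.C (eval v p) * rho n v with hq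
  have hqmem : q ∈ restrictDegree (Fin n) (ZMod 2) 1 := by
    refine Submodule.sub_mem _ hp (Submodule.sum_mem _ fun v _ => ?_)
    rw [← smul_eq_C_mul]
    exact Submodule.smul_mem _ _ (rho_mem_restrict v)
  have hqeval : ∀ w : Fin n → ZMod 2, eval w q = 0 := by
    intro w
    rw [hq, map_sub, map_sum]
    have : ∀ v : Fin n → ZMod 2,
        eval w (MvPolynomial.C (eval v p) * rho n v) = if v = w then eval v p else 0 := by
      intro v
      rw [map_mul, eval_C, eval_rho, mul_ite, mul_one, mul_zero]
    rw [Finset.sum_congr rfl (fun v _ => this v),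
      Finset.sum_ite_eq' Finset.univ w (fun v => eval v p), if_pos (Finset.mem_univ w)]
    exact sub_self _
  have : q = 0 := by
    refine MvPolynomial.eq_zero_of_eval_eq_zero _ _ q hqeval ?_
    rwa [hcard]
  rw [hq] at this
  exact sub_eq_zero.mp this

/-! ### Ideal membership -/

lemma eval_zero_of_mem {Co : Set (Fin n → ZMod 2)} {f : P n}
    (hf : f ∈ neuralIdeal n Co) {v : Fin n → ZMod 2} (hv : v ∈ Co) : eval v f = 0 := by
  have hle : neuralIdeal n Co ≤ RingHom.ker (eval v) := by
    rw [neuralIdeal, Ideal.span_le]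
    rintro p ⟨w, hw, rfl⟩
    have hwv : w ≠ v := fun h => hw (h ▸ hv)
    rw [SetLike.mem_coe, RingHom.mem_ker, eval_rho, if_neg hwv]
  exact RingHom.mem_ker.mp (hle hf)

lemma mem_neuralIdeal_of_vanish {Co : Set (Fin n → ZMod 2)} {p : P n}
    (hp : p ∈ restrictDegree (Fin n) (ZMod 2) 1)
    (h : ∀ v ∈ Co, eval v p = 0) : p ∈ neuralIdeal n Co := by
  classical
  rw [interp hp]
  refine Ideal.sum_mem _ fun v _ => ?_
  by_cases hv : v ∈ Co
  · rw [h v hv, map_zero, zero_mul]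
    exact Ideal.zero_mem _
  · exact Ideal.mul_mem_left _ _ (Ideal.subset_span ⟨v, hv, rfl⟩)


/-! ### CF characterization -/

lemma cube_mono {σ' σ τ' τ : Finset (Fin n)} (hσ : σ' ⊆ σ) (hτ : τ' ⊆ τ)
    {v : Fin n → ZMod 2} (h : cube σ τ v) : cube σ' τ' v :=
  ⟨fun i hi => h.1 i (hσ hi), fun j hj => h.2 j (hτ hj)⟩

lemma covers_mono {D : Set (Fin n → ZMod 2)} {σ σ' τ τ' : Finset (Fin n)}
    (hσ : σ ⊆ σ') (hτ : τ ⊆ τ') (h : Covers D σ τ) : Covers D σ' τ' :=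
  fun v hv hc => h v hv (cube_mono hσ hτ hc)

lemma covers_union_iff {Co : Set (Fin n → ZMod 2)} {c : Fin n → ZMod 2}
    {σ τ : Finset (Fin n)} :
    Covers (Co ∪ {c}) σ τ ↔ Covers Co σ τ ∧ ¬ cube σ τ c := by
  constructor
  · intro h
    exact ⟨fun v hv => h v (Or.inl hv), h c (Or.inr rfl)⟩
  · rintro ⟨h1, h2⟩ v hv
    rcases hv with hv | hv
    · exact h1 v hv
    · rw [Set.mem_singleton_iff] at hv
      subst hv
      exact h2

lemma mem_CF_iff {Co : Set (Fin n → ZMod 2)} {f : P n} :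
    f ∈ CF n (neuralIdeal n Co) ↔ ∃ σ τ : Finset (Fin n), f = pm σ τ ∧ MinCov Co σ τ := by
  constructor
  · rintro ⟨hJ, ⟨σ, τ, hd, hf⟩, hmin⟩
    have hf' : f = pm σ τ := hf
    subst hf'
    have hcov : Covers Co σ τ := fun v hv => eval_pm_eq_zero.mp (eval_zero_of_mem hJ hv)
    refine ⟨σ, τ, rfl, hd, hcov, ?_⟩
    intro σ' τ' hσ hτ hcov'
    by_contra hne
    have hd' : Disjoint σ' τ' := hd.mono hσ hτ
    have hgJ : pm σ' τ' ∈ neuralIdeal n Co :=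
      mem_neuralIdeal_of_vanish (pm_mem_restrict hd')
        (fun v hv => eval_pm_eq_zero.mpr (hcov' v hv))
    have hcard : σ'.card + τ'.card < σ.card + τ.card := by
      rw [not_and_or] at hne
      have c1 := Finset.card_le_card hσ
      have c2 := Finset.card_le_card hτ
      rcases hne with h | h
      · have := Finset.card_lt_card (lt_of_le_of_ne hσ h)
        omega
      · have := Finset.card_lt_card (lt_of_le_of_ne hτ h)
        omega
    refine hmin ⟨pm σ' τ', ⟨σ', τ', hd', rfl⟩, hgJ, ?_, dvd_pm_of_le hσ hτ⟩
    rw [totalDegree_pm hd', totalDegree_pm hd]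
    exact hcard
  · rintro ⟨σ, τ, rfl, hd, hcov, hminc⟩
    refine ⟨mem_neuralIdeal_of_vanish (pm_mem_restrict hd)
      (fun v hv => eval_pm_eq_zero.mpr (hcov v hv)), ⟨σ, τ, hd, rfl⟩, ?_⟩
    rintro ⟨g, ⟨σ₁, τ₁, hd₁, rfl⟩, hgJ, hdeg, h, heq⟩
    have hle := le_of_pm_eq_mul hd hd₁ heq
    have hcov₁ : Covers Co σ₁ τ₁ := fun v hv => eval_pm_eq_zero.mp (eval_zero_of_mem hgJ hv)
    obtain ⟨h1, h2⟩ := hminc σ₁ τ₁ hle.1 hle.2 hcov₁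
    subst h1; subst h2
    exact lt_irrefl _ hdeg

lemma exists_minCov {D : Set (Fin n → ZMod 2)} (σ τ : Finset (Fin n)) (hd : Disjoint σ τ)
    (hcov : Covers D σ τ) : ∃ σ' τ', σ' ⊆ σ ∧ τ' ⊆ τ ∧ MinCov D σ' τ' := by
  classical
  generalize hk : σ.card + τ.card = k
  induction k using Nat.strong_induction_on generalizing σ τ with
  | _ k ih =>
    by_cases H : ∀ σ' τ' : Finset (Fin n), σ' ⊆ σ → τ' ⊆ τ → Covers D σ' τ' → σ' = σ ∧ τ' = τ
    · exact ⟨σ, τ, Finset.Subset.refl σ, Finset.Subset.refl τ, hd, hcov, H⟩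
    · push_neg at H
      obtain ⟨σ₁, τ₁, hσ₁, hτ₁, hcov₁, hne⟩ := H
      have hlt : σ₁.card + τ₁.card < k := by
        subst hk
        have c1 := Finset.card_le_card hσ₁
        have c2 := Finset.card_le_card hτ₁
        by_cases h : σ₁ = σ
        · have := Finset.card_lt_card (lt_of_le_of_ne hτ₁ (hne h))
          omega
        · have := Finset.card_lt_card (lt_of_le_of_ne hσ₁ h)
          omega
      obtain ⟨σ', τ', h1, h2, h3⟩ := ih _ hlt σ₁ τ₁ (hd.mono hσ₁ hτ₁) hcov₁ rfl
      exact ⟨σ', τ', h1.trans hσ₁, h2.trans hτ₁, h3⟩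

/-! ### Extension lemmas -/

lemma pm_insert_left {σ τ : Finset (Fin n)} {j : Fin n} (hj : j ∉ σ) :
    pm (insert j σ) τ = pm σ τ * X j := by
  unfold pm
  rw [Finset.prod_insert hj]
  ring

lemma pm_insert_right {σ τ : Finset (Fin n)} {j : Fin n} (hj : j ∉ τ) :
    pm σ (insert j τ) = pm σ τ * (1 - X j) := by
  unfold pm
  rw [Finset.prod_insert hj]
  ring

lemma X_sub_one (j : Fin n) : (X j - 1 : P n) = 1 - X j := by
  rw [CharTwo.sub_eq_add, CharTwo.sub_eq_add, add_comm]

lemma pm_single_right (j : Fin n) : pm (∅ : Finset (Fin n)) {j} = 1 - X j := by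
  simp [pm]

lemma pm_single_left (j : Fin n) : pm ({j} : Finset (Fin n)) ∅ = X j := by
  simp [pm]

lemma one_sub_X_dvd_iff {σ τ : Finset (Fin n)} (hd : Disjoint σ τ) (j : Fin n) :
    (1 - X j : P n) ∣ pm σ τ ↔ j ∈ τ := by
  constructor
  · rintro ⟨h, heq⟩
    rw [← pm_single_right] at heq
    have hle := le_of_pm_eq_mul hd (by simp) heq
    exact hle.2 (Finset.mem_singleton_self j)
  · intro hj
    have := dvd_pm_of_le (Finset.empty_subset σ) (Finset.singleton_subset_iff.mpr hj)
    rwa [pm_single_right] at this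

lemma X_dvd_iff {σ τ : Finset (Fin n)} (hd : Disjoint σ τ) (j : Fin n) :
    (X j : P n) ∣ pm σ τ ↔ j ∈ σ := by
  constructor
  · rintro ⟨h, heq⟩
    rw [← pm_single_left] at heq
    have hle := le_of_pm_eq_mul hd (by simp) heq
    exact hle.1 (Finset.mem_singleton_self j)
  · intro hj
    have := dvd_pm_of_le (Finset.singleton_subset_iff.mpr hj) (Finset.empty_subset τ)
    rwa [pm_single_left] at this

lemma Xc0 {c : Fin n → ZMod 2} {j : Fin n} (h : c j = 0) :
    (X j - C (c j) : P n) = X j := by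
  rw [h, map_zero, sub_zero]

lemma Xc1 {c : Fin n → ZMod 2} {j : Fin n} (h : c j = 1) :
    (X j - C (c j) : P n) = 1 - X j := by
  rw [h, map_one, X_sub_one]

lemma Xc0m1 {c : Fin n → ZMod 2} {j : Fin n} (h : c j = 0) :
    (X j - C (c j) - 1 : P n) = 1 - X j := by
  rw [h, map_zero, sub_zero, X_sub_one]

lemma Xc1m1 {c : Fin n → ZMod 2} {j : Fin n} (h : c j = 1) :
    (X j - C (c j) - 1 : P n) = X j := by
  have h2 : ((1 : P n) + 1) = 0 := by
    rw [show (1 : P n) = MvPolynomial.C (1 : ZMod 2) from (C_1).symm, ← map_add,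
      show (1 : ZMod 2) + 1 = 0 by decide, map_zero]
  rw [h, map_one, sub_sub, h2, sub_zero]

end NeuralAux

open NeuralAux in
/-- the iterative step `CF(J_{C∪{c}}) = L ∪ N`. -/
theorem stmt1 (n : ℕ) (hn : 1 ≤ n) (Co : Set (Fin n → ZMod 2)) (c : Fin n → ZMod 2)
    (L M N : Set (MvPolynomial (Fin n) (ZMod 2)))
    (hL : L = { f | f ∈ CF n (neuralIdeal n Co) ∧ eval c f = 0 })
    (hM : M = { f | f ∈ CF n (neuralIdeal n Co) ∧ eval c f = 1 })
    (hN : N = { p | ∃ f ∈ M, ∃ j : Fin n,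
        p = f * (X j - C (c j)) ∧ ¬ (X j - C (c j) - 1) ∣ f ∧
        ¬ ∃ g ∈ L, g ∣ f * (X j - C (c j)) }) :
    CF n (neuralIdeal n (Co ∪ {c})) = L ∪ N := by
  classical
  -- Direction 1
  have dir1 : CF n (neuralIdeal n (Co ∪ {c})) ⊆ L ∪ N := by
    intro p hp
    obtain ⟨σ, τ, rfl, hd, hcovU, hminU⟩ := mem_CF_iff.mp hp
    rw [covers_union_iff] at hcovU
    obtain ⟨hcovC, hkill⟩ := hcovU
    by_cases hmin : MinCov Co σ τ
    · left
      rw [hL]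
      exact ⟨mem_CF_iff.mpr ⟨σ, τ, rfl, hmin⟩, eval_pm_eq_zero.mpr hkill⟩
    · right
      have hex : ∃ σ' τ' : Finset (Fin n), σ' ⊆ σ ∧ τ' ⊆ τ ∧ Covers Co σ' τ' ∧
          ¬(σ' = σ ∧ τ' = τ) := by
        by_contra hcon
        push_neg at hcon
        exact hmin ⟨hd, hcovC, fun σ' τ' h1 h2 h3 => hcon σ' τ' h1 h2 h3⟩
      obtain ⟨σ', τ', hσ', hτ', hcov', hne⟩ := hex
      obtain ⟨σ₀, τ₀, hσ₀, hτ₀, hmc₀⟩ := exists_minCov σ' τ' (hd.mono hσ' hτ') hcov'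
      have hσ₀σ : σ₀ ⊆ σ := hσ₀.trans hσ'
      have hτ₀τ : τ₀ ⊆ τ := hτ₀.trans hτ'
      have hcube₀ : cube σ₀ τ₀ c := by
        by_contra hc0
        obtain ⟨e1, e2⟩ := hminU σ₀ τ₀ hσ₀σ hτ₀τ (covers_union_iff.mpr ⟨hmc₀.2.1, hc0⟩)
        exact hne ⟨hσ'.antisymm (e1 ▸ hσ₀), hτ'.antisymm (e2 ▸ hτ₀)⟩
      have hfM : pm σ₀ τ₀ ∈ M := by
        rw [hM]
        exact ⟨mem_CF_iff.mpr ⟨σ₀, τ₀, rfl, hmc₀⟩, eval_pm_eq_one.mpr hcube₀⟩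
      have hkill' : (∃ i ∈ σ, c i = 0) ∨ ∃ j ∈ τ, c j = 1 := by
        by_contra hcon
        push_neg at hcon
        refine hkill ⟨fun i hi => ?_, fun j hj => ?_⟩
        · rcases zmod2_cases (c i) with h | h
          · exact absurd h (hcon.1 i hi)
          · exact h
        · rcases zmod2_cases (c j) with h | h
          · exact h
          · exact absurd h (hcon.2 j hj)
      rw [hN]
      rcases hkill' with ⟨j, hjσ, hcj⟩ | ⟨j, hjτ, hcj⟩
      · -- c j = 0, j ∈ σ
        have hjσ₀ : j ∉ σ₀ := fun h => one_ne_zero ((hcube₀.1 j h).symm.trans hcj)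
        have hjτ₀ : j ∉ τ₀ := fun h => Finset.disjoint_left.mp hd hjσ (hτ₀τ h)
        have hin : insert j σ₀ ⊆ σ := Finset.insert_subset hjσ hσ₀σ
        have hcovi : Covers (Co ∪ {c}) (insert j σ₀) τ₀ := by
          rw [covers_union_iff]
          exact ⟨covers_mono (Finset.subset_insert j σ₀) (Finset.Subset.refl τ₀) hmc₀.2.1,
            fun hcu => one_ne_zero ((hcu.1 j (Finset.mem_insert_self j σ₀)).symm.trans hcj)⟩
        obtain ⟨e1, e2⟩ := hminU (insert j σ₀) τ₀ hin hτ₀τ hcovi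
        refine ⟨pm σ₀ τ₀, hfM, j, ?_, ?_, ?_⟩
        · rw [Xc0 hcj, ← pm_insert_left hjσ₀, e1, e2]
        · rw [Xc0m1 hcj]
          intro hdvd
          exact hjτ₀ ((one_sub_X_dvd_iff hmc₀.1 j).mp hdvd)
        · rintro ⟨g, hgL, hgd⟩
          rw [hL] at hgL
          obtain ⟨hgCF, hgc⟩ := hgL
          obtain ⟨σ₂, τ₂, rfl, hmc₂⟩ := mem_CF_iff.mp hgCF
          rw [Xc0 hcj, ← pm_insert_left hjσ₀, e1, e2] at hgd
          obtain ⟨h, heq⟩ := hgd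
          obtain ⟨l1, l2⟩ := le_of_pm_eq_mul hd hmc₂.1 heq
          obtain ⟨f1, f2⟩ := hminU σ₂ τ₂ l1 l2
            (covers_union_iff.mpr ⟨hmc₂.2.1, eval_pm_eq_zero.mp hgc⟩)
          apply hmin
          rw [← f1, ← f2]
          exact hmc₂
      · -- c j = 1, j ∈ τ
        have hjτ₀ : j ∉ τ₀ := fun h => zero_ne_one ((hcube₀.2 j h).symm.trans hcj)
        have hjσ₀ : j ∉ σ₀ := fun h => Finset.disjoint_left.mp hd (hσ₀σ h) hjτ
        have hin : insert j τ₀ ⊆ τ := Finset.insert_subset hjτ hτ₀τ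
        have hcovi : Covers (Co ∪ {c}) σ₀ (insert j τ₀) := by
          rw [covers_union_iff]
          exact ⟨covers_mono (Finset.Subset.refl σ₀) (Finset.subset_insert j τ₀) hmc₀.2.1,
            fun hcu => zero_ne_one ((hcu.2 j (Finset.mem_insert_self j τ₀)).symm.trans hcj)⟩
        obtain ⟨e1, e2⟩ := hminU σ₀ (insert j τ₀) hσ₀σ hin hcovi
        refine ⟨pm σ₀ τ₀, hfM, j, ?_, ?_, ?_⟩
        · rw [Xc1 hcj, ← pm_insert_right hjτ₀, e1, e2]
        · rw [Xc1m1 hcj]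
          intro hdvd
          exact hjσ₀ ((X_dvd_iff hmc₀.1 j).mp hdvd)
        · rintro ⟨g, hgL, hgd⟩
          rw [hL] at hgL
          obtain ⟨hgCF, hgc⟩ := hgL
          obtain ⟨σ₂, τ₂, rfl, hmc₂⟩ := mem_CF_iff.mp hgCF
          rw [Xc1 hcj, ← pm_insert_right hjτ₀, e1, e2] at hgd
          obtain ⟨h, heq⟩ := hgd
          obtain ⟨l1, l2⟩ := le_of_pm_eq_mul hd hmc₂.1 heq
          obtain ⟨f1, f2⟩ := hminU σ₂ τ₂ l1 l2
            (covers_union_iff.mpr ⟨hmc₂.2.1, eval_pm_eq_zero.mp hgc⟩)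
          apply hmin
          rw [← f1, ← f2]
          exact hmc₂
  refine Set.Subset.antisymm dir1 ?_
  -- Direction 2
  rintro p (hpL | hpN)
  · rw [hL] at hpL
    obtain ⟨hpCF, hpc⟩ := hpL
    obtain ⟨σ, τ, rfl, hd, hcov, hminc⟩ := mem_CF_iff.mp hpCF
    refine mem_CF_iff.mpr ⟨σ, τ, rfl, hd,
      covers_union_iff.mpr ⟨hcov, eval_pm_eq_zero.mp hpc⟩, ?_⟩
    intro σ' τ' h1 h2 h3
    exact hminc σ' τ' h1 h2 (covers_union_iff.mp h3).1
  · rw [hN] at hpN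
    obtain ⟨f, hfM, j, hpeq, hnd, hnL⟩ := hpN
    rw [hM] at hfM
    obtain ⟨hfCF, hfc⟩ := hfM
    obtain ⟨σ₀, τ₀, rfl, hmc₀⟩ := mem_CF_iff.mp hfCF
    obtain ⟨hd₀, hcov₀, hminc₀⟩ := hmc₀
    have hcube₀ : cube σ₀ τ₀ c := eval_pm_eq_one.mp hfc
    rcases zmod2_cases (c j) with hcj | hcj
    · -- c j = 0
      have hjτ₀ : j ∉ τ₀ := fun h =>
        hnd (by rw [Xc0m1 hcj]; exact (one_sub_X_dvd_iff hd₀ j).mpr h)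
      have hjσ₀ : j ∉ σ₀ := fun h => one_ne_zero ((hcube₀.1 j h).symm.trans hcj)
      have hdi : Disjoint (insert j σ₀) τ₀ := by
        rw [Finset.disjoint_insert_left]
        exact ⟨hjτ₀, hd₀⟩
      have hpe : p = pm (insert j σ₀) τ₀ := by
        rw [hpeq, Xc0 hcj, pm_insert_left hjσ₀]
      rw [hpe]
      refine mem_CF_iff.mpr ⟨insert j σ₀, τ₀, rfl, hdi, covers_union_iff.mpr
        ⟨covers_mono (Finset.subset_insert j σ₀) (Finset.Subset.refl τ₀) hcov₀,
          fun hcu => one_ne_zero ((hcu.1 j (Finset.mem_insert_self j σ₀)).symm.trans hcj)⟩, ?_⟩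
      intro σ' τ' h1 h2 h3
      obtain ⟨σ₂, τ₂, m1, m2, hmc₂⟩ := exists_minCov σ' τ' (hdi.mono h1 h2) h3
      have hgCF : pm σ₂ τ₂ ∈ CF n (neuralIdeal n (Co ∪ {c})) :=
        mem_CF_iff.mpr ⟨σ₂, τ₂, rfl, hmc₂⟩
      rcases dir1 hgCF with hgL | hgN
      · exfalso
        apply hnL
        refine ⟨pm σ₂ τ₂, hgL, ?_⟩
        rw [Xc0 hcj, ← pm_insert_left hjσ₀]
        exact dvd_pm_of_le (m1.trans h1) (m2.trans h2)
      · rw [hN] at hgN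
        obtain ⟨f₁, hf₁M, k, hgeq, hnd₁, _⟩ := hgN
        rw [hM] at hf₁M
        obtain ⟨hf₁CF, hf₁c⟩ := hf₁M
        obtain ⟨σ₃, τ₃, rfl, hmc₃⟩ := mem_CF_iff.mp hf₁CF
        have hcube₃ : cube σ₃ τ₃ c := eval_pm_eq_one.mp hf₁c
        rcases zmod2_cases (c k) with hck | hck
        · -- c k = 0
          have hkτ₃ : k ∉ τ₃ := fun h =>
            hnd₁ (by rw [Xc0m1 hck]; exact (one_sub_X_dvd_iff hmc₃.1 k).mpr h)
          have hkσ₃ : k ∉ σ₃ := fun h => one_ne_zero ((hcube₃.1 k h).symm.trans hck)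
          have hdk : Disjoint (insert k σ₃) τ₃ := by
            rw [Finset.disjoint_insert_left]
            exact ⟨hkτ₃, hmc₃.1⟩
          rw [Xc0 hck, ← pm_insert_left hkσ₃] at hgeq
          obtain ⟨q1, q2⟩ := pm_inj hmc₂.1 hdk hgeq
          have hkσ₂ : k ∈ σ₂ := q1 ▸ Finset.mem_insert_self k σ₃
          have hkij : k ∈ insert j σ₀ := h1 (m1 hkσ₂)
          have hkj : k = j := by
            rcases Finset.mem_insert.mp hkij with h | h
            · exact h
            · exact absurd ((hcube₀.1 k h).symm.trans hck) one_ne_zero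
          subst hkj
          have hσ₃σ₀ : σ₃ ⊆ σ₀ := by
            intro x hx
            have hx₂ : x ∈ σ₂ := q1 ▸ Finset.mem_insert_of_mem hx
            rcases Finset.mem_insert.mp (h1 (m1 hx₂)) with h | h
            · exact absurd (h ▸ hx) hkσ₃
            · exact h
          have hτ₃τ₀ : τ₃ ⊆ τ₀ := q2 ▸ (m2.trans h2)
          obtain ⟨r1, r2⟩ := hminc₀ σ₃ τ₃ hσ₃σ₀ hτ₃τ₀ hmc₃.2.1
          have hσ₂eq : σ₂ = insert k σ₀ := by rw [q1, r1]
          have hτ₂eq : τ₂ = τ₀ := by rw [q2, r2]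
          constructor
          · exact h1.antisymm (hσ₂eq ▸ m1)
          · exact h2.antisymm (hτ₂eq ▸ m2)
        · -- c k = 1 : impossible
          have hkσ₃ : k ∉ σ₃ := fun h =>
            hnd₁ (by rw [Xc1m1 hck]; exact (X_dvd_iff hmc₃.1 k).mpr h)
          have hkτ₃ : k ∉ τ₃ := fun h => zero_ne_one ((hcube₃.2 k h).symm.trans hck)
          have hdk : Disjoint σ₃ (insert k τ₃) := by
            rw [Finset.disjoint_insert_right]
            exact ⟨hkσ₃, hmc₃.1⟩
          rw [Xc1 hck, ← pm_insert_right hkτ₃] at hgeq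
          obtain ⟨q1, q2⟩ := pm_inj hmc₂.1 hdk hgeq
          have hkτ₂ : k ∈ τ₂ := q2 ▸ Finset.mem_insert_self k τ₃
          have hkτ₀ : k ∈ τ₀ := h2 (m2 hkτ₂)
          exact absurd ((hcube₀.2 k hkτ₀).symm.trans hck) zero_ne_one
    · -- c j = 1
      have hjσ₀ : j ∉ σ₀ := fun h =>
        hnd (by rw [Xc1m1 hcj]; exact (X_dvd_iff hd₀ j).mpr h)
      have hjτ₀ : j ∉ τ₀ := fun h => zero_ne_one ((hcube₀.2 j h).symm.trans hcj)
      have hdi : Disjoint σ₀ (insert j τ₀) := by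
        rw [Finset.disjoint_insert_right]
        exact ⟨hjσ₀, hd₀⟩
      have hpe : p = pm σ₀ (insert j τ₀) := by
        rw [hpeq, Xc1 hcj, pm_insert_right hjτ₀]
      rw [hpe]
      refine mem_CF_iff.mpr ⟨σ₀, insert j τ₀, rfl, hdi, covers_union_iff.mpr
        ⟨covers_mono (Finset.Subset.refl σ₀) (Finset.subset_insert j τ₀) hcov₀,
          fun hcu => zero_ne_one ((hcu.2 j (Finset.mem_insert_self j τ₀)).symm.trans hcj)⟩, ?_⟩
      intro σ' τ' h1 h2 h3
      obtain ⟨σ₂, τ₂, m1, m2, hmc₂⟩ := exists_minCov σ' τ' (hdi.mono h1 h2) h3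
      have hgCF : pm σ₂ τ₂ ∈ CF n (neuralIdeal n (Co ∪ {c})) :=
        mem_CF_iff.mpr ⟨σ₂, τ₂, rfl, hmc₂⟩
      rcases dir1 hgCF with hgL | hgN
      · exfalso
        apply hnL
        refine ⟨pm σ₂ τ₂, hgL, ?_⟩
        rw [Xc1 hcj, ← pm_insert_right hjτ₀]
        exact dvd_pm_of_le (m1.trans h1) (m2.trans h2)
      · rw [hN] at hgN
        obtain ⟨f₁, hf₁M, k, hgeq, hnd₁, _⟩ := hgN
        rw [hM] at hf₁M
        obtain ⟨hf₁CF, hf₁c⟩ := hf₁M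
        obtain ⟨σ₃, τ₃, rfl, hmc₃⟩ := mem_CF_iff.mp hf₁CF
        have hcube₃ : cube σ₃ τ₃ c := eval_pm_eq_one.mp hf₁c
        rcases zmod2_cases (c k) with hck | hck
        · -- c k = 0 : impossible
          have hkτ₃ : k ∉ τ₃ := fun h =>
            hnd₁ (by rw [Xc0m1 hck]; exact (one_sub_X_dvd_iff hmc₃.1 k).mpr h)
          have hkσ₃ : k ∉ σ₃ := fun h => one_ne_zero ((hcube₃.1 k h).symm.trans hck)
          have hdk : Disjoint (insert k σ₃) τ₃ := by
            rw [Finset.disjoint_insert_left]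
            exact ⟨hkτ₃, hmc₃.1⟩
          rw [Xc0 hck, ← pm_insert_left hkσ₃] at hgeq
          obtain ⟨q1, q2⟩ := pm_inj hmc₂.1 hdk hgeq
          have hkσ₂ : k ∈ σ₂ := q1 ▸ Finset.mem_insert_self k σ₃
          have hkσ₀ : k ∈ σ₀ := h1 (m1 hkσ₂)
          exact absurd ((hcube₀.1 k hkσ₀).symm.trans hck) one_ne_zero
        · -- c k = 1
          have hkσ₃ : k ∉ σ₃ := fun h =>
            hnd₁ (by rw [Xc1m1 hck]; exact (X_dvd_iff hmc₃.1 k).mpr h)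
          have hkτ₃ : k ∉ τ₃ := fun h => zero_ne_one ((hcube₃.2 k h).symm.trans hck)
          have hdk : Disjoint σ₃ (insert k τ₃) := by
            rw [Finset.disjoint_insert_right]
            exact ⟨hkσ₃, hmc₃.1⟩
          rw [Xc1 hck, ← pm_insert_right hkτ₃] at hgeq
          obtain ⟨q1, q2⟩ := pm_inj hmc₂.1 hdk hgeq
          have hkτ₂ : k ∈ τ₂ := q2 ▸ Finset.mem_insert_self k τ₃
          have hkij : k ∈ insert j τ₀ := h2 (m2 hkτ₂)
          have hkj : k = j := by
            rcases Finset.mem_insert.mp hkij with h | h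
            · exact h
            · exact absurd ((hcube₀.2 k h).symm.trans hck) zero_ne_one
          subst hkj
          have hτ₃τ₀ : τ₃ ⊆ τ₀ := by
            intro x hx
            have hx₂ : x ∈ τ₂ := q2 ▸ Finset.mem_insert_of_mem hx
            rcases Finset.mem_insert.mp (h2 (m2 hx₂)) with h | h
            · exact absurd (h ▸ hx) hkτ₃
            · exact h
          have hσ₃σ₀ : σ₃ ⊆ σ₀ := q1 ▸ (m1.trans h1)
          obtain ⟨r1, r2⟩ := hminc₀ σ₃ τ₃ hσ₃σ₀ hτ₃τ₀ hmc₃.2.1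
          have hσ₂eq : σ₂ = σ₀ := by rw [q1, r1]
          have hτ₂eq : τ₂ = insert k τ₀ := by rw [q2, r2]
          constructor
          · exact h1.antisymm (hσ₂eq ▸ m1)
          · exact h2.antisymm (hτ₂eq ▸ m2)
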